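/- arXiv:2303.07681 — 3 statements merged into one kernel-verified Lean document; each statement's English description precedes it below -/
import Mathlib

section
/- Let Γ be a finite G-arc-transitive digraph of valency r ≥ 4. Then for every arc (u,v) of Γ, |Γ^+(u) ∩ Γ^+(v)| ≠ r − 2. -/
namespace SGeodesicDigraph

variable {V : Type*}

/-- `p : Fin (n+1) → V` is an `n`-arc of the digraph with adjacency relation `A`. -/
def IsArcSeq (A : V → V → Prop) (n : ℕ) (p : Fin (n + 1) → V) : Prop :=
  ∀ i : Fin n, A (p i.castSucc) (p i.succ)

/-- The directed distance from `u` to `v`: the length of a shortest directed path. -/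
noncomputable def ddist (A : V → V → Prop) (u v : V) : ℕ :=
  sInf {n : ℕ | ∃ p : Fin (n + 1) → V, IsArcSeq A n p ∧ p 0 = u ∧ p (Fin.last n) = v}

/-- `p` is an `n`-geodesic: an `n`-arc whose endpoints are at directed distance `n`. -/
def IsGeodesic (A : V → V → Prop) (n : ℕ) (p : Fin (n + 1) → V) : Prop :=
  IsArcSeq A n p ∧ ddist A (p 0) (p (Fin.last n)) = n

/-- Connectivity of the underlying undirected graph. -/
def DConnected (A : V → V → Prop) : Prop :=
  ∀ u v : V, Relation.ReflTransGen (fun x y => A x y ∨ A y x) u v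

/-- The diameter: the maximum of the directed distances. -/
noncomputable def diam (A : V → V → Prop) : ℕ :=
  sSup {d : ℕ | ∃ u v : V, ddist A u v = d}

/-- The subgroup `G` of permutations of the vertices consists of automorphisms of `A`. -/
def AutActs (A : V → V → Prop) (G : Subgroup (Equiv.Perm V)) : Prop :=
  ∀ g ∈ G, ∀ u v : V, A u v ↔ A (g u) (g v)

/-- `G` is transitive on the arcs. -/
def ArcTrans (A : V → V → Prop) (G : Subgroup (Equiv.Perm V)) : Prop :=
  ∀ u v x y : V, A u v → A x y → ∃ g ∈ G, g u = x ∧ g v = y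

/-- `G` is transitive on the 2-arcs. -/
def TwoArcTrans (A : V → V → Prop) (G : Subgroup (Equiv.Perm V)) : Prop :=
  ∀ u v w u' v' w' : V, A u v → A v w → A u' v' → A v' w' →
    ∃ g ∈ G, g u = u' ∧ g v = v' ∧ g w = w'

/-- `Γ` is `(G,s)`-geodesic-transitive: `G` is transitive on the `i`-geodesics for all `i ≤ s`. -/
def GeoTrans (A : V → V → Prop) (G : Subgroup (Equiv.Perm V)) (s : ℕ) : Prop :=
  ∀ i ≤ s, ∀ p q : Fin (i + 1) → V, IsGeodesic A i p → IsGeodesic A i q →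
    ∃ g ∈ G, ∀ j : Fin (i + 1), g (p j) = q j

/-- every vertex has `k` out-neighbours and `k` in-neighbours. -/
def HasValency (A : V → V → Prop) (k : ℕ) : Prop :=
  ∀ v : V, {u : V | A v u}.ncard = k ∧ {u : V | A u v}.ncard = k

/-- The digraph is a circuit (a directed cycle) on `r ≥ 3` vertices. -/
def IsCircuit (A : V → V → Prop) : Prop :=
  ∃ r : ℕ, 3 ≤ r ∧ ∃ e : ZMod r ≃ V, ∀ i j : ZMod r, A (e i) (e j) ↔ j = i + 1

/-- `u` and `v` lie in the same `N`-orbit. -/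
def SameOrb (N : Subgroup (Equiv.Perm V)) (u v : V) : Prop := ∃ n ∈ N, n u = v

/-- `N` is transitive on the vertex set. -/
def SubTrans (N : Subgroup (Equiv.Perm V)) : Prop := ∀ u v : V, SameOrb N u v

/-- `N` is regular on the vertex set: transitive with trivial point stabilizers. -/
def SubRegular (N : Subgroup (Equiv.Perm V)) : Prop :=
  SubTrans N ∧ ∀ n ∈ N, ∀ v : V, n v = v → n = 1

/-- `N` is a normal subgroup of `G`. -/
def NormalIn (N G : Subgroup (Equiv.Perm V)) : Prop :=
  N ≤ G ∧ ∀ g ∈ G, ∀ n ∈ N, g * n * g⁻¹ ∈ N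

/-- `N` has at least three orbits on the vertex set. -/
def AtLeastThreeOrbits (N : Subgroup (Equiv.Perm V)) : Prop :=
  ∃ u v w : V, ¬ SameOrb N u v ∧ ¬ SameOrb N u w ∧ ¬ SameOrb N v w

/-- `N` has at most two orbits on the vertex set. -/
def AtMostTwoOrbits (N : Subgroup (Equiv.Perm V)) : Prop :=
  ∃ u v : V, ∀ w : V, SameOrb N u w ∨ SameOrb N v w

/-- `N` has exactly two orbits on the vertex set. -/
def ExactlyTwoOrbits (N : Subgroup (Equiv.Perm V)) : Prop :=
  AtMostTwoOrbits N ∧ ¬ SubTrans N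

/-- The `N`-orbit of `v`. -/
def orb (N : Subgroup (Equiv.Perm V)) (v : V) : Set V := {u : V | SameOrb N v u}

/-- The vertex set of the quotient digraph `Γ_N`: the `N`-orbits. -/
abbrev OrbV (N : Subgroup (Equiv.Perm V)) : Type _ := {S : Set V // ∃ v : V, S = orb N v}

/-- The adjacency relation of the quotient digraph `Γ_N`: `(A,B)` is an arc iff some
`a ∈ A`, `b ∈ B` form an arc of `Γ`. -/
def QRel (A : V → V → Prop) (N : Subgroup (Equiv.Perm V)) (S T : OrbV N) : Prop :=
  ∃ a ∈ S.1, ∃ b ∈ T.1, A a b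

/-- `G/N` (acting via `G`, with `g` sending each orbit to its image) is transitive on the
`i`-geodesics of the quotient digraph `Γ_N` for all `i ≤ s`. -/
def QuotGeoTrans (A : V → V → Prop) (G N : Subgroup (Equiv.Perm V)) (s : ℕ) : Prop :=
  ∀ i ≤ s, ∀ p q : Fin (i + 1) → OrbV N,
    IsGeodesic (QRel A N) i p → IsGeodesic (QRel A N) i q →
      ∃ g ∈ G, ∀ j : Fin (i + 1), ⇑g '' (p j).1 = (q j).1

/-- `G/N` is transitive on the arcs of the quotient digraph `Γ_N`. -/
def QuotArcTrans (A : V → V → Prop) (G N : Subgroup (Equiv.Perm V)) : Prop :=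
  ∀ S T S' T' : OrbV N, QRel A N S T → QRel A N S' T' →
    ∃ g ∈ G, ⇑g '' S.1 = S'.1 ∧ ⇑g '' T.1 = T'.1

/-- `G/N` is quasiprimitive on the `N`-orbits: by the correspondence theorem, the nontrivial
normal subgroups of `G/N` are exactly the `M/N` with `N < M` normal in `G`, and (as `N ≤ M`)
`M/N` is transitive on the `N`-orbits iff `M` is transitive on the vertices. -/
def QuasiprimitiveQuotient (G N : Subgroup (Equiv.Perm V)) : Prop :=
  ∀ M : Subgroup (Equiv.Perm V), NormalIn M G → N < M → SubTrans M

/-- `G/N` is bi-quasiprimitive on the `N`-orbits: every nontrivial normal subgroup `M/N` of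
`G/N` has at most two orbits, and some nontrivial normal subgroup has exactly two orbits. -/
def BiQuasiprimitiveQuotient (G N : Subgroup (Equiv.Perm V)) : Prop :=
  (∀ M : Subgroup (Equiv.Perm V), NormalIn M G → N < M → AtMostTwoOrbits M) ∧
  (∃ M : Subgroup (Equiv.Perm V), NormalIn M G ∧ N < M ∧ ExactlyTwoOrbits M)

/-- The permutation group `G` is quasiprimitive on the vertex set. -/
def Quasiprimitive (G : Subgroup (Equiv.Perm V)) : Prop :=
  SubTrans G ∧ ∀ M : Subgroup (Equiv.Perm V), NormalIn M G → M ≠ ⊥ → SubTrans M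

/-- The permutation group `G` is bi-quasiprimitive on the vertex set. -/
def BiQuasiprimitive (G : Subgroup (Equiv.Perm V)) : Prop :=
  SubTrans G ∧ (∀ M : Subgroup (Equiv.Perm V), NormalIn M G → M ≠ ⊥ → AtMostTwoOrbits M) ∧
  ∃ M : Subgroup (Equiv.Perm V), NormalIn M G ∧ M ≠ ⊥ ∧ ExactlyTwoOrbits M

/-- **Lemma 4.6.** Let `Γ` be a finite `G`-arc-transitive digraph of valency `r ≥ 4`. Then
`|Γ⁺(u) ∩ Γ⁺(v)| ≠ r - 2` for every arc `(u,v)`. -/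
theorem common_outnbr_ne_sub_two {V : Type*} [Fintype V] (A : V → V → Prop)
    (G : Subgroup (Equiv.Perm V)) (r : ℕ)
    (hA : ∀ u v : V, A u v → ¬ A v u)
    (hGaut : AutActs A G)
    (hat : ArcTrans A G)
    (hval : HasValency A r) (hr : 4 ≤ r) :
    ∀ u v : V, A u v → ({w : V | A u w} ∩ {w : V | A v w}).ncard ≠ r - 2 := by
  classical
  intro u v huv hc
  -- Step 1: the same count holds for every arc, by arc-transitivity.
  have key : ∀ x y : V, A x y → ({w : V | A x w} ∩ {w : V | A y w}).ncard = r - 2 := by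
    intro x y hxy
    obtain ⟨g, hgG, hgu, hgv⟩ := hat u v x y huv hxy
    have himg : ⇑g '' ({w : V | A u w} ∩ {w : V | A v w})
        = {w : V | A x w} ∩ {w : V | A y w} := by
      ext w
      simp only [Set.mem_image, Set.mem_inter_iff, Set.mem_setOf_eq]
      constructor
      · rintro ⟨z, ⟨h1, h2⟩, rfl⟩
        exact ⟨hgu ▸ (hGaut g hgG u z).mp h1, hgv ▸ (hGaut g hgG v z).mp h2⟩
      · rintro ⟨h1, h2⟩
        refine ⟨g.symm w, ⟨?_, ?_⟩, Equiv.apply_symm_apply g w⟩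
        · have := (hGaut g hgG u (g.symm w)).mpr
          rw [hgu, Equiv.apply_symm_apply] at this
          exact this h1
        · have := (hGaut g hgG v (g.symm w)).mpr
          rw [hgv, Equiv.apply_symm_apply] at this
          exact this h2
    rw [← himg, Set.ncard_image_of_injective _ g.injective, hc]
  -- Step 2: translate to Finset cardinalities inside S = Γ⁺(u).
  set S : Finset V := Finset.univ.filter (fun w => A u w) with hSdef
  have hncard : ∀ p : V → Prop, {w : V | p w}.ncard = (Finset.univ.filter p).card := by
    intro p
    rw [Set.ncard_eq_toFinset_card']
    congr 1
    ext w
    simp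
  have hScard : S.card = r := by
    have := (hval u).1
    rwa [hncard] at this
  have hout : ∀ x ∈ S, (S.filter (fun y => A x y)).card = r - 2 := by
    intro x hx
    have hux : A u x := by simpa [hSdef] using hx
    have h2 : {w : V | A u w ∧ A x w}.ncard = r - 2 := key u x hux
    rw [hncard] at h2
    rw [hSdef, Finset.filter_filter]
    rw [← h2]
    congr 1
    ext w
    simp
  -- Step 3: in-degree within S is at most 1.
  have hin : ∀ y ∈ S, (S.filter (fun x => A x y)).card ≤ 1 := by
    intro y hy
    have hsub : (S.filter (fun y' => A y y')) ∪ {y} ∪ S.filter (fun x => A x y) ⊆ S := by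
      intro z hz
      simp only [Finset.mem_union, Finset.mem_singleton, Finset.mem_filter] at hz
      rcases hz with (⟨h, _⟩ | rfl) | ⟨h, _⟩
      exacts [h, hy, h]
    have hd1 : Disjoint (S.filter (fun y' => A y y') ∪ {y}) (S.filter (fun x => A x y)) := by
      rw [Finset.disjoint_left]
      intro z hz hz'
      simp only [Finset.mem_union, Finset.mem_singleton, Finset.mem_filter] at hz hz'
      rcases hz with ⟨_, h⟩ | rfl
      · exact hA y z h hz'.2
      · exact hA z z hz'.2 hz'.2
    have hd2 : Disjoint (S.filter (fun y' => A y y')) ({y} : Finset V) := by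
      rw [Finset.disjoint_right]
      intro z hz hm
      rw [Finset.mem_singleton] at hz
      rw [Finset.mem_filter] at hm
      exact hA y y (hz ▸ hm.2) (hz ▸ hm.2)
    have hcard : ((S.filter (fun y' => A y y') ∪ {y}) ∪ S.filter (fun x => A x y)).card
        = (r - 2) + 1 + (S.filter (fun x => A x y)).card := by
      rw [Finset.card_union_of_disjoint hd1, Finset.card_union_of_disjoint hd2,
        hout y hy, Finset.card_singleton]
    have hle := Finset.card_le_card hsub
    rw [hcard, hScard] at hle
    omega
  -- Step 4: double counting.
  have hsum : ∑ x ∈ S, (S.filter (fun y => A x y)).card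
      = ∑ y ∈ S, (S.filter (fun x => A x y)).card := by
    simp only [Finset.card_filter]
    rw [Finset.sum_comm]
  have hL : ∑ x ∈ S, (S.filter (fun y => A x y)).card = r * (r - 2) := by
    rw [Finset.sum_congr rfl hout, Finset.sum_const, hScard, smul_eq_mul]
  have hR : ∑ y ∈ S, (S.filter (fun x => A x y)).card ≤ r * 1 := by
    calc ∑ y ∈ S, (S.filter (fun x => A x y)).card ≤ ∑ _y ∈ S, 1 :=
          Finset.sum_le_sum hin
      _ = r * 1 := by rw [Finset.sum_const, hScard, smul_eq_mul]
  have : r * (r - 2) ≤ r * 1 := by rw [← hL, hsum]; exact hR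
  have := Nat.le_of_mul_le_mul_left this (by omega : 0 < r)
  omega

end SGeodesicDigraph
end

section
/- Let Γ be a finite (G,2)-geodesic-transitive digraph of valency 4. Then Γ is (G,2)-arc-transitive. -/
namespace SGeodesicDigraph

variable {V : Type*}

section Aux

variable {A : V → V → Prop}

lemma arcSeq_two {u v : V} (h : A u v) : IsArcSeq A 1 ![u, v] := by
  intro i; fin_cases i; simpa using h

lemma arcSeq_three {u v w : V} (h1 : A u v) (h2 : A v w) : IsArcSeq A 2 ![u, v, w] := by
  intro i; fin_cases i
  · simpa using h1
  · simpa using h2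

lemma ddist_eq_one (hA : ∀ u v : V, A u v → ¬ A v u) {u v : V} (h : A u v) :
    ddist A u v = 1 := by
  set D := {n : ℕ | ∃ p : Fin (n + 1) → V, IsArcSeq A n p ∧ p 0 = u ∧ p (Fin.last n) = v}
    with hD
  have h1 : 1 ∈ D := ⟨![u, v], arcSeq_two h, rfl, rfl⟩
  have hm : sInf D ∈ D := Nat.sInf_mem ⟨1, h1⟩
  have hle : sInf D ≤ 1 := Nat.sInf_le h1
  have hne : sInf D ≠ 0 := by
    intro h0
    rw [h0] at hm
    obtain ⟨p, _, hp0, hpl⟩ := hm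
    have huv : u = v := by rw [← hp0, ← hpl]; rfl
    subst huv
    exact hA u u h h
  have : ddist A u v = sInf D := by rw [ddist, hD]
  omega

lemma ddist_eq_two (hA : ∀ u v : V, A u v → ¬ A v u) {u v w : V} (h1 : A u v) (h2 : A v w)
    (h3 : ¬ A u w) (h4 : u ≠ w) : ddist A u w = 2 := by
  set D := {n : ℕ | ∃ p : Fin (n + 1) → V, IsArcSeq A n p ∧ p 0 = u ∧ p (Fin.last n) = w}
    with hD
  have hmem2 : 2 ∈ D := ⟨![u, v, w], arcSeq_three h1 h2, rfl, rfl⟩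
  have hm : sInf D ∈ D := Nat.sInf_mem ⟨2, hmem2⟩
  have hle : sInf D ≤ 2 := Nat.sInf_le hmem2
  have hne0 : sInf D ≠ 0 := by
    intro h0
    rw [h0] at hm
    obtain ⟨p, _, hp0, hpl⟩ := hm
    exact h4 (by rw [← hp0, ← hpl]; rfl)
  have hne1 : sInf D ≠ 1 := by
    intro h0
    rw [h0] at hm
    obtain ⟨p, hp, hp0, hpl⟩ := hm
    have := hp 0
    simp only [Fin.castSucc_zero, Fin.succ_zero_eq_one] at this
    rw [hp0] at this
    rw [show p 1 = w from hpl] at this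
    exact h3 this
  have : ddist A u w = sInf D := by rw [ddist, hD]
  omega

end Aux

/-- **Lemma 4.7.** Let `Γ` be a finite `(G,2)`-geodesic-transitive digraph of valency `4`.
Then `Γ` is `(G,2)`-arc-transitive. -/
theorem valency_four_geo_to_arc {V : Type*} [Fintype V] (A : V → V → Prop)
    (G : Subgroup (Equiv.Perm V))
    (hA : ∀ u v : V, A u v → ¬ A v u)
    (hGaut : AutActs A G)
    (hval : HasValency A 4)
    (hgt : GeoTrans A G 2) :
    TwoArcTrans A G := by
  classical
  have hirr : ∀ x : V, ¬ A x x := fun x h => hA x x h h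
  -- arc-transitivity, from transitivity on 1-geodesics
  have harcT : ∀ u v x y : V, A u v → A x y → ∃ g ∈ G, g u = x ∧ g v = y := by
    intro u v x y h1 h2
    have g1 : IsGeodesic A 1 ![u, v] := ⟨arcSeq_two h1, ddist_eq_one hA h1⟩
    have g2 : IsGeodesic A 1 ![x, y] := ⟨arcSeq_two h2, ddist_eq_one hA h2⟩
    obtain ⟨g, hg, hj⟩ := hgt 1 (by norm_num) _ _ g1 g2
    exact ⟨g, hg, by simpa using hj 0, by simpa using hj 1⟩
  -- images of the "common out-neighbour" and "midpoint" sets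
  have himgOut : ∀ g : Equiv.Perm V, g ∈ G → ∀ u v : V,
      g '' {x | A u x ∧ A v x} = {x | A (g u) x ∧ A (g v) x} := by
    intro g hg u v
    ext x
    constructor
    · rintro ⟨y, ⟨hy1, hy2⟩, rfl⟩
      exact ⟨(hGaut g hg u y).1 hy1, (hGaut g hg v y).1 hy2⟩
    · rintro ⟨hx1, hx2⟩
      refine ⟨g⁻¹ x, ⟨?_, ?_⟩, g.apply_symm_apply x⟩
      · have := hGaut g hg u (g⁻¹ x)
        rw [show g (g⁻¹ x) = x from g.apply_symm_apply x] at this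
        exact this.2 hx1
      · have := hGaut g hg v (g⁻¹ x)
        rw [show g (g⁻¹ x) = x from g.apply_symm_apply x] at this
        exact this.2 hx2
  have himgMid : ∀ g : Equiv.Perm V, g ∈ G → ∀ u v : V,
      g '' {x | A u x ∧ A x v} = {x | A (g u) x ∧ A x (g v)} := by
    intro g hg u v
    ext x
    constructor
    · rintro ⟨y, ⟨hy1, hy2⟩, rfl⟩
      exact ⟨(hGaut g hg u y).1 hy1, (hGaut g hg y v).1 hy2⟩
    · rintro ⟨hx1, hx2⟩
      refine ⟨g⁻¹ x, ⟨?_, ?_⟩, g.apply_symm_apply x⟩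
      · have := hGaut g hg u (g⁻¹ x)
        rw [show g (g⁻¹ x) = x from g.apply_symm_apply x] at this
        exact this.2 hx1
      · have := hGaut g hg (g⁻¹ x) v
        rw [show g (g⁻¹ x) = x from g.apply_symm_apply x] at this
        exact this.2 hx2
  -- no 2-arc closes a triangle
  have hnot : ∀ u0 v0 w0 : V, A u0 v0 → A v0 w0 → ¬ A u0 w0 := by
    intro u0 v0 w0 huv hvw huw
    set t0 := ({x | A u0 x ∧ A v0 x}).ncard with ht0
    -- the number of common out-neighbours is constant over arcs
    have ht : ∀ x y : V, A x y → ({z | A x z ∧ A y z}).ncard = t0 := by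
      intro x y hxy
      obtain ⟨g, hg, hgu, hgv⟩ := harcT x y u0 v0 hxy huv
      calc ({z | A x z ∧ A y z}).ncard = (g '' {z | A x z ∧ A y z}).ncard :=
            (Set.ncard_image_of_injective _ g.injective).symm
        _ = ({z | A (g x) z ∧ A (g y) z}).ncard := by rw [himgOut g hg]
        _ = t0 := by rw [hgu, hgv, ht0]
    set c := ({z | A u0 z ∧ A z v0}).ncard with hcdef
    -- the in-degree within Γ⁺(u0) is constant
    have hc : ∀ y : V, A u0 y → ({z | A u0 z ∧ A z y}).ncard = c := by
      intro y hy
      obtain ⟨g, hg, hgu, hgv⟩ := harcT u0 y u0 v0 hy huv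
      calc ({z | A u0 z ∧ A z y}).ncard = (g '' {z | A u0 z ∧ A z y}).ncard :=
            (Set.ncard_image_of_injective _ g.injective).symm
        _ = ({z | A (g u0) z ∧ A z (g y)}).ncard := by rw [himgMid g hg]
        _ = c := by rw [hgu, hgv, hcdef]
    -- double counting inside Γ⁺(u0)
    set sf := (Set.toFinite {x | A u0 x}).toFinset with hsf
    have hsfmem : ∀ x, x ∈ sf ↔ A u0 x := by
      intro x; rw [hsf, Set.Finite.mem_toFinset]; rfl
    have hsfcard : sf.card = 4 := by
      rw [hsf, ← Set.ncard_eq_toFinset_card]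
      exact (hval u0).1
    have hout : ∀ v ∈ sf, (sf.filter (fun w => A v w)).card = t0 := by
      intro v hv
      rw [← ht u0 v ((hsfmem v).1 hv)]
      have he : {z | A u0 z ∧ A v z} = ↑(sf.filter (fun w => A v w)) := by
        ext z; simp [hsfmem]
      rw [he, Set.ncard_coe_finset]
    have hin : ∀ w ∈ sf, (sf.filter (fun v => A v w)).card = c := by
      intro w hw
      rw [← hc w ((hsfmem w).1 hw)]
      have he : {z | A u0 z ∧ A z w} = ↑(sf.filter (fun v => A v w)) := by
        ext z; simp [hsfmem]
      rw [he, Set.ncard_coe_finset]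
    have hdouble : ∑ v ∈ sf, (sf.filter (fun w => A v w)).card
        = ∑ w ∈ sf, (sf.filter (fun v => A v w)).card := by
      simp only [Finset.card_filter]
      exact Finset.sum_comm
    have h4t : ∑ v ∈ sf, (sf.filter (fun w => A v w)).card = 4 * t0 := by
      rw [Finset.sum_congr rfl hout, Finset.sum_const, hsfcard, smul_eq_mul]
    have h4c : ∑ w ∈ sf, (sf.filter (fun v => A v w)).card = 4 * c := by
      rw [Finset.sum_congr rfl hin, Finset.sum_const, hsfcard, smul_eq_mul]
    have hct : c = t0 := by omega
    -- t0 ≥ 1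
    have ht0pos : 1 ≤ t0 := by
      rw [ht0]
      have : ({x | A u0 x ∧ A v0 x}).Nonempty := ⟨w0, huw, hvw⟩
      have := (Set.ncard_pos (Set.toFinite _)).2 this
      omega
    -- t0 ≤ 1
    have hle1 : t0 ≤ 1 := by
      by_contra hgt1
      push_neg at hgt1
      have hdisj : Disjoint {z | A u0 z ∧ A v0 z} {z | A u0 z ∧ A z v0} := by
        rw [Set.disjoint_left]
        rintro z ⟨_, hz1⟩ ⟨_, hz2⟩
        exact hA _ _ hz1 hz2
      have hsub : {z | A u0 z ∧ A v0 z} ∪ {z | A u0 z ∧ A z v0} ⊆ {x | A u0 x} \ {v0} := by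
        rintro z (⟨hz1, hz2⟩ | ⟨hz1, hz2⟩)
        · exact ⟨hz1, by rintro rfl; exact hirr _ hz2⟩
        · exact ⟨hz1, by rintro rfl; exact hirr _ hz2⟩
      have hcard : ({z | A u0 z ∧ A v0 z} ∪ {z | A u0 z ∧ A z v0}).ncard = t0 + c := by
        rw [Set.ncard_union_eq hdisj (Set.toFinite _) (Set.toFinite _), ht0, hcdef]
      have hles : ({z | A u0 z ∧ A v0 z} ∪ {z | A u0 z ∧ A z v0}).ncard
          ≤ ({x | A u0 x} \ {v0}).ncard := Set.ncard_le_ncard hsub (Set.toFinite _)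
      have hdcard : ({x | A u0 x} \ {v0}).ncard = 3 := by
        rw [Set.ncard_diff_singleton_of_mem (show v0 ∈ {x | A u0 x} from huv), (hval u0).1]
      omega
    have ht01 : t0 = 1 := le_antisymm hle1 ht0pos
    -- extract d and w
    obtain ⟨d, hd⟩ := Set.ncard_eq_one.mp (hcdef ▸ (hct.trans ht01))
    have hd1 : A u0 d ∧ A d v0 := by
      have : d ∈ {z | A u0 z ∧ A z v0} := by rw [hd]; rfl
      exact this
    obtain ⟨w, hw⟩ := Set.ncard_eq_one.mp ((ht d v0 hd1.2).trans ht01)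
    have hw1 : A d w ∧ A v0 w := by
      have : w ∈ {z | A d z ∧ A v0 z} := by rw [hw]; rfl
      exact this
    -- w is not an out-neighbour of u0
    have hnuw : ¬ A u0 w := by
      intro huw'
      have hmw : ({z | A u0 z ∧ A z w}).ncard = 1 := by rw [hc w huw', hct, ht01]
      obtain ⟨e, he⟩ := Set.ncard_eq_one.mp hmw
      have h1 : d ∈ {z | A u0 z ∧ A z w} := ⟨hd1.1, hw1.1⟩
      have h2 : v0 ∈ {z | A u0 z ∧ A z w} := ⟨huv, hw1.2⟩
      rw [he, Set.mem_singleton_iff] at h1 h2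
      rw [h1, ← h2] at hd1
      exact hirr _ hd1.2
    -- the set X of 2-geodesic extensions of (u0, v0) has 3 elements
    have hXcard : ({x | A v0 x ∧ ¬ A u0 x}).ncard = 3 := by
      have hsplit : {x | A v0 x} = {x | A u0 x ∧ A v0 x} ∪ {x | A v0 x ∧ ¬ A u0 x} := by
        ext x
        by_cases h : A u0 x <;> simp [h]
      have hdisj : Disjoint {x | A u0 x ∧ A v0 x} {x | A v0 x ∧ ¬ A u0 x} := by
        rw [Set.disjoint_left]
        rintro z ⟨hz1, _⟩ ⟨_, hz2⟩
        exact hz2 hz1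
      have h4 := (hval v0).1
      rw [hsplit, Set.ncard_union_eq hdisj (Set.toFinite _) (Set.toFinite _)] at h4
      rw [← ht0, ht01] at h4
      omega
    -- every 2-geodesic extension equals w: contradiction
    have hsub : {x | A v0 x ∧ ¬ A u0 x} ⊆ {w} := by
      rintro x ⟨hx1, hx2⟩
      have geo : ∀ y : V, A v0 y → ¬ A u0 y → IsGeodesic A 2 ![u0, v0, y] := by
        intro y hy1 hy2
        refine ⟨arcSeq_three huv hy1, ?_⟩
        have hne : u0 ≠ y := by rintro rfl; exact hA _ _ huv hy1
        exact ddist_eq_two hA huv hy1 hy2 hne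
      obtain ⟨g, hg, hj⟩ := hgt 2 le_rfl _ _ (geo w hw1.2 hnuw) (geo x hx1 hx2)
      have hgu : g u0 = u0 := by simpa using hj 0
      have hgv : g v0 = v0 := by simpa using hj 1
      have hgw : g w = x := by simpa using hj 2
      have hgd : g d = d := by
        have h1 : g d ∈ g '' {z | A u0 z ∧ A z v0} := Set.mem_image_of_mem g ⟨hd1.1, hd1.2⟩
        rw [himgMid g hg, hgu, hgv, hd] at h1
        simpa using h1
      have hgww : g w = w := by
        have h1 : g w ∈ g '' {z | A d z ∧ A v0 z} := Set.mem_image_of_mem g ⟨hw1.1, hw1.2⟩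
        rw [himgOut g hg, hgd, hgv, hw] at h1
        simpa using h1
      rw [Set.mem_singleton_iff, ← hgw]
      exact hgww
    have hfin : ({x | A v0 x ∧ ¬ A u0 x}).ncard ≤ 1 := by
      have := Set.ncard_le_ncard hsub (Set.toFinite _)
      simpa using this
    omega
  -- conclude: every 2-arc is a 2-geodesic
  intro u v w u' v' w' huv hvw huv' hvw'
  have g1 : IsGeodesic A 2 ![u, v, w] := by
    refine ⟨arcSeq_three huv hvw, ?_⟩
    have hne : u ≠ w := by rintro rfl; exact hA _ _ huv hvw
    exact ddist_eq_two hA huv hvw (hnot u v w huv hvw) hne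
  have g2 : IsGeodesic A 2 ![u', v', w'] := by
    refine ⟨arcSeq_three huv' hvw', ?_⟩
    have hne : u' ≠ w' := by rintro rfl; exact hA _ _ huv' hvw'
    exact ddist_eq_two hA huv' hvw' (hnot u' v' w' huv' hvw') hne
  obtain ⟨g, hg, hj⟩ := hgt 2 le_rfl _ _ g1 g2
  exact ⟨g, hg, by simpa using hj 0, by simpa using hj 1, by simpa using hj 2⟩


end SGeodesicDigraph
end

section
/- Let Γ be a finite G-arc-transitive digraph of valency 5. If |Γ^+(u) ∩ Γ^+(v)| = 2 for some arc (u,v) of Γ, then Γ is not (G,2)-geodesic-transitive. -/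
namespace SGeodesicDigraph

variable {V : Type*}

/-- **Lemma 4.8.** Let `Γ` be a finite `G`-arc-transitive digraph of valency `5`. If
`|Γ⁺(u) ∩ Γ⁺(v)| = 2` for some arc `(u,v)`, then `Γ` is not `(G,2)`-geodesic-transitive. -/
theorem valency_five_not_geo_trans {V : Type*} [Fintype V] (A : V → V → Prop)
    (G : Subgroup (Equiv.Perm V))
    (hA : ∀ u v : V, A u v → ¬ A v u)
    (hGaut : AutActs A G)
    (hat : ArcTrans A G)
    (hval : HasValency A 5)
    (u v : V) (huv : A u v)
    (hcap : ({w : V | A u w} ∩ {w : V | A v w}).ncard = 2) :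
    ¬ GeoTrans A G 2 := by
  classical
  intro hgt
  have hirr : ∀ x : V, ¬ A x x := fun x h => hA x x h h
  -- constancy of |Γ⁺(x) ∩ Γ⁺(y)| over arcs
  have hconst : ∀ x y : V, A x y → ({w : V | A x w} ∩ {w : V | A y w}).ncard = 2 := by
    intro x y hxy
    obtain ⟨g, hg, hgu, hgv⟩ := hat u v x y huv hxy
    have himg : (⇑g) '' ({w : V | A u w} ∩ {w : V | A v w})
        = {w : V | A x w} ∩ {w : V | A y w} := by
      ext z
      simp only [Set.mem_image, Set.mem_inter_iff, Set.mem_setOf_eq]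
      constructor
      · rintro ⟨w, ⟨h1, h2⟩, rfl⟩
        exact ⟨hgu ▸ (hGaut g hg u w).mp h1, hgv ▸ (hGaut g hg v w).mp h2⟩
      · rintro ⟨h1, h2⟩
        refine ⟨g⁻¹ z, ⟨?_, ?_⟩, (Equiv.apply_symm_apply g z : g (g⁻¹ z) = z)⟩
        · refine (hGaut g hg u (g⁻¹ z)).mpr ?_
          rw [hgu, (by exact Equiv.apply_symm_apply g z : g (g⁻¹ z) = z)]; exact h1
        · refine (hGaut g hg v (g⁻¹ z)).mpr ?_
          rw [hgv, (by exact Equiv.apply_symm_apply g z : g (g⁻¹ z) = z)]; exact h2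
    rw [← himg, Set.ncard_image_of_injective _ g.injective]
    exact hcap
  -- 2-geodesics
  have hgeo : ∀ t : V, A v t → ¬ A u t → IsGeodesic A 2 ![u, v, t] := by
    intro t hvt hut
    have htu : t ≠ u := fun h => hA u v huv (h ▸ hvt)
    have harc : IsArcSeq A 2 ![u, v, t] := by
      intro i
      fin_cases i
      · exact huv
      · exact hvt
    refine ⟨harc, ?_⟩
    have h0 : (![u, v, t] : Fin 3 → V) 0 = u := rfl
    have hl : (![u, v, t] : Fin 3 → V) (Fin.last 2) = t := rfl
    rw [h0, hl]
    unfold ddist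
    set M : Set ℕ := {n : ℕ | ∃ p : Fin (n + 1) → V,
      IsArcSeq A n p ∧ p 0 = u ∧ p (Fin.last n) = t} with hM
    have h2mem : 2 ∈ M := ⟨![u, v, t], harc, rfl, rfl⟩
    have h0mem : 0 ∉ M := by
      rintro ⟨p, -, hp0, hpl⟩
      have : (Fin.last 0) = (0 : Fin 1) := rfl
      rw [this, hp0] at hpl
      exact htu hpl.symm
    have h1mem : 1 ∉ M := by
      rintro ⟨p, hp, hp0, hpl⟩
      have h := hp 0
      have e1 : (Fin.castSucc 0 : Fin 2) = 0 := rfl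
      have e2 : (Fin.succ 0 : Fin 2) = Fin.last 1 := rfl
      rw [e1, e2, hp0, hpl] at h
      exact hut h
    have hmem := Nat.sInf_mem (⟨2, h2mem⟩ : M.Nonempty)
    have hle := Nat.sInf_le h2mem
    have : sInf M = 0 ∨ sInf M = 1 ∨ sInf M = 2 := by omega
    rcases this with h | h | h
    · rw [h] at hmem; exact absurd hmem h0mem
    · rw [h] at hmem; exact absurd hmem h1mem
    · exact h
  -- moving one 2-geodesic to another
  have move : ∀ t₀ t' : V, A v t₀ → ¬ A u t₀ → A v t' → ¬ A u t' →
      ∃ g ∈ G, g u = u ∧ g v = v ∧ g t₀ = t' := by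
    intro t₀ t' h1 h2 h3 h4
    obtain ⟨g, hg, hj⟩ := hgt 2 le_rfl ![u, v, t₀] ![u, v, t']
      (hgeo t₀ h1 h2) (hgeo t' h3 h4)
    exact ⟨g, hg, hj 0, hj 1, hj 2⟩
  -- the two common out-neighbours
  obtain ⟨s₁, s₂, hs12, hS⟩ := Set.ncard_eq_two.mp hcap
  have hs1 : A u s₁ ∧ A v s₁ := by
    have : s₁ ∈ ({s₁, s₂} : Set V) := by simp
    rw [← hS] at this; exact this
  have hs2 : A u s₂ ∧ A v s₂ := by
    have : s₂ ∈ ({s₁, s₂} : Set V) := by simp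
    rw [← hS] at this; exact this
  -- T = Γ⁺(v) \ Γ⁺(u), of size 3
  set T : Set V := {w : V | A v w ∧ ¬ A u w} with hTdef
  have hT3 : T.ncard = 3 := by
    have hTset : T = {w : V | A v w} \ ({w : V | A u w} ∩ {w : V | A v w}) := by
      ext w; simp only [hTdef, Set.mem_setOf_eq, Set.mem_diff, Set.mem_inter_iff]; tauto
    rw [hTset, Set.ncard_diff Set.inter_subset_right (Set.toFinite _), (hval v).1, hcap]
  have pick : ∀ W : Set V, W ⊆ T → W.ncard = 2 → ∃ t', t' ∈ T ∧ t' ∉ W := by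
    intro W hWT hW2
    by_contra h
    push_neg at h
    have hle : T.ncard ≤ W.ncard := Set.ncard_le_ncard (fun x hx => h x hx) (Set.toFinite _)
    omega
  -- images of s₁, s₂ under elements of G_{uv}
  have hSinv : ∀ g : Equiv.Perm V, g ∈ G → g u = u → g v = v → ∀ s : V,
      A u s → A v s → A u (g s) ∧ A v (g s) := by
    intro g hg hgu hgv s h1 h2
    exact ⟨hgu ▸ (hGaut g hg u s).mp h1, hgv ▸ (hGaut g hg v s).mp h2⟩
  -- main argument, case of an arc inside {s₁, s₂}
  have main : ∀ a b : V, a ≠ b →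
      ({w : V | A u w} ∩ {w : V | A v w}) = {a, b} → A a b → False := by
    intro a b hne hab harc
    have hvb : A v b := by
      have : b ∈ ({a, b} : Set V) := by simp
      rw [← hab] at this; exact this.2
    set W : Set V := {w : V | A v w} ∩ {w : V | A b w} with hWdef
    have hW2 : W.ncard = 2 := hconst v b hvb
    have hWT : W ⊆ T := by
      rintro w ⟨hvw, hbw⟩
      refine ⟨hvw, fun huw => ?_⟩
      have hw : w ∈ ({a, b} : Set V) := by rw [← hab]; exact ⟨huw, hvw⟩
      rcases hw with rfl | rfl
      · exact hA w b harc hbw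
      · exact hirr w hbw
    obtain ⟨t', ht'T, ht'W⟩ := pick W hWT hW2
    have hWne : W.Nonempty := Set.nonempty_of_ncard_ne_zero (by omega)
    obtain ⟨t₀, ht₀W⟩ := hWne
    have ht₀T := hWT ht₀W
    obtain ⟨g, hg, hgu, hgv, hgt⟩ := move t₀ t' ht₀T.1 ht₀T.2 ht'T.1 ht'T.2
    have hua : A u a ∧ A v a := by
      have : a ∈ ({a, b} : Set V) := by simp
      rw [← hab] at this; exact this
    have hub : A u b ∧ A v b := by
      have : b ∈ ({a, b} : Set V) := by simp
      rw [← hab] at this; exact this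
    have hga : g a ∈ ({a, b} : Set V) := by
      rw [← hab]
      exact hSinv g hg hgu hgv a hua.1 hua.2
    have hgb : g b ∈ ({a, b} : Set V) := by
      rw [← hab]
      exact hSinv g hg hgu hgv b hub.1 hub.2
    have hgbb : g b = b := by
      rcases hgb with h | h
      · rcases hga with h' | h'
        · exact absurd (g.injective (h'.trans h.symm)) hne
        · -- g a = b, g b = a
          have := (hGaut g hg a b).mp harc
          rw [h', h] at this
          exact absurd this (hA a b harc)
      · exact h
    -- g preserves W but moves t₀ out of it
    rcases ht₀W with ⟨hvt₀, hbt₀⟩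
    have : A v (g t₀) ∧ A b (g t₀) :=
      ⟨hgv ▸ (hGaut g hg v t₀).mp hvt₀, hgbb ▸ (hGaut g hg b t₀).mp hbt₀⟩
    rw [hgt] at this
    exact ht'W this
  -- now split on whether there is an arc inside {s₁, s₂}
  by_cases h12 : A s₁ s₂
  · exact main s₁ s₂ hs12 hS h12
  by_cases h21 : A s₂ s₁
  · exact main s₂ s₁ hs12.symm (by rw [hS, Set.pair_comm]) h21
  -- no arc inside {s₁, s₂}
  have hWT : ∀ s : V, s ∈ ({s₁, s₂} : Set V) →
      ({w : V | A v w} ∩ {w : V | A s w}) ⊆ T := by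
    rintro s hs w ⟨hvw, hsw⟩
    refine ⟨hvw, fun huw => ?_⟩
    have hw : w ∈ ({s₁, s₂} : Set V) := by rw [← hS]; exact ⟨huw, hvw⟩
    rcases hs with rfl | rfl
    · rcases hw with rfl | rfl
      · exact hirr w hsw
      · exact h12 hsw
    · rcases hw with rfl | rfl
      · exact h21 hsw
      · exact hirr w hsw
  set W₁ : Set V := {w : V | A v w} ∩ {w : V | A s₁ w} with hW₁def
  set W₂ : Set V := {w : V | A v w} ∩ {w : V | A s₂ w} with hW₂def
  have hW₁T : W₁ ⊆ T := hWT s₁ (by simp)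
  have hW₂T : W₂ ⊆ T := hWT s₂ (by simp)
  have hW₁2 : W₁.ncard = 2 := hconst v s₁ hs1.2
  have hW₂2 : W₂.ncard = 2 := hconst v s₂ hs2.2
  -- W₁ ∩ W₂ is nonempty
  have hmeet : (W₁ ∩ W₂).Nonempty := by
    rw [Set.nonempty_iff_ne_empty]
    intro hemp
    have hdisj : Disjoint W₁ W₂ := Set.disjoint_iff_inter_eq_empty.mpr hemp
    have h4 : (W₁ ∪ W₂).ncard = 4 := by
      rw [Set.ncard_union_eq hdisj (Set.toFinite _) (Set.toFinite _), hW₁2, hW₂2]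
    have h3 : (W₁ ∪ W₂).ncard ≤ T.ncard :=
      Set.ncard_le_ncard (Set.union_subset hW₁T hW₂T) (Set.toFinite _)
    omega
  obtain ⟨t₀, ht₀1, ht₀2⟩ := hmeet
  obtain ⟨t', ht'T, ht'W⟩ := pick W₁ hW₁T hW₁2
  have ht₀T := hW₁T ht₀1
  obtain ⟨g, hg, hgu, hgv, hgt⟩ := move t₀ t' ht₀T.1 ht₀T.2 ht'T.1 ht'T.2
  have hga : g s₁ ∈ ({s₁, s₂} : Set V) := by
    rw [← hS]; exact hSinv g hg hgu hgv s₁ hs1.1 hs1.2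
  have hgb : g s₂ ∈ ({s₁, s₂} : Set V) := by
    rw [← hS]; exact hSinv g hg hgu hgv s₂ hs2.1 hs2.2
  have hAs1 : A s₁ (g t₀) := by
    rcases hga with h | h
    · have := (hGaut g hg s₁ t₀).mp ht₀1.2
      rwa [h] at this
    · rcases hgb with h' | h'
      · have := (hGaut g hg s₂ t₀).mp ht₀2.2
        rwa [h'] at this
      · exact absurd (g.injective (h.trans h'.symm)) hs12
  have hAv : A v (g t₀) := hgv ▸ (hGaut g hg v t₀).mp ht₀1.1
  rw [hgt] at hAs1 hAv
  exact ht'W ⟨hAv, hAs1⟩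

end SGeodesicDigraph
end
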